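/- arXiv:2409.14452 — 4 statements merged into one kernel-verified Lean document; each statement's English description precedes it below -/
import Mathlib

section
/- L²(X,μ) is a flat L^∞(X,μ)-module. Equivalently (equational criterion for flatness over the commutative unital ring L^∞(X,μ)): whenever n ∈ ℕ, r_1,…,r_n ∈ L^∞(X,μ) and m_1,…,m_n ∈ L²(X,μ) satisfy r_1m_1 + ⋯ + r_nm_n = 0 in L²(X,μ), there exist k ∈ ℕ, elements ρ_{ij} ∈ L^∞(X,μ) (1 ≤ i ≤ n, 1 ≤ j ≤ k) and μ_1,…,μ_k ∈ L²(X,μ) such that ∑_{i=1}^n r_i ρ_{ij} = 0 for every j and m_i = ∑_{j=1}^k ρ_{ij} μ_j for every i. -/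
open MeasureTheory Filter Topology
open scoped ENNReal

set_option synthInstance.maxHeartbeats 1000000
set_option maxHeartbeats 1000000

noncomputable section

variable {α : Type*} [MeasurableSpace α] {ν : MeasureTheory.Measure α}

/-- The commutative ring structure on the space of (equivalence classes of) a.e.-defined
complex-valued functions, given by pointwise multiplication. -/
instance AEEqFunCommRing : CommRing (α →ₘ[ν] ℂ) where
  __ := AEEqFun.instAddCommGroup (α := α) (μ := ν) (γ := ℂ)
  __ := AEEqFun.instCommMonoid (α := α) (μ := ν) (γ := ℂ)
  left_distrib f g h := by
    apply AEEqFun.ext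
    filter_upwards [AEEqFun.coeFn_mul f (g + h), AEEqFun.coeFn_add g h,
      AEEqFun.coeFn_add (f * g) (f * h), AEEqFun.coeFn_mul f g, AEEqFun.coeFn_mul f h]
      with x h1 h2 h3 h4 h5
    simp only [Pi.mul_apply, Pi.add_apply] at h1 h2 h3 h4 h5
    simp [h1, h2, h3, h4, h5, mul_add]
  right_distrib f g h := by
    apply AEEqFun.ext
    filter_upwards [AEEqFun.coeFn_mul (f + g) h, AEEqFun.coeFn_add f g,
      AEEqFun.coeFn_add (f * h) (g * h), AEEqFun.coeFn_mul f h, AEEqFun.coeFn_mul g h]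
      with x h1 h2 h3 h4 h5
    simp only [Pi.mul_apply, Pi.add_apply] at h1 h2 h3 h4 h5
    simp [h1, h2, h3, h4, h5, add_mul]
  zero_mul f := by
    apply AEEqFun.ext
    filter_upwards [AEEqFun.coeFn_mul (0 : α →ₘ[ν] ℂ) f,
      AEEqFun.coeFn_zero (α := α) (μ := ν) (β := ℂ)] with x h1 h2
    simp only [Pi.mul_apply, Pi.zero_apply] at h1 h2 ⊢
    simp [h1, h2]
  mul_zero f := by
    apply AEEqFun.ext
    filter_upwards [AEEqFun.coeFn_mul f (0 : α →ₘ[ν] ℂ),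
      AEEqFun.coeFn_zero (α := α) (μ := ν) (β := ℂ)] with x h1 h2
    simp only [Pi.mul_apply, Pi.zero_apply] at h1 h2 ⊢
    simp [h1, h2]

instance AEEqFunAlgebra : Algebra ℂ (α →ₘ[ν] ℂ) :=
  Algebra.ofModule
    (fun c f g => by
      apply AEEqFun.ext
      filter_upwards [AEEqFun.coeFn_mul (c • f) g, AEEqFun.coeFn_smul c f,
        AEEqFun.coeFn_smul c (f * g), AEEqFun.coeFn_mul f g] with x h1 h2 h3 h4
      simp only [Pi.mul_apply, Pi.smul_apply, smul_eq_mul] at h1 h2 h3 h4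
      simp [h1, h2, h3, h4]; ring)
    (fun c f g => by
      apply AEEqFun.ext
      filter_upwards [AEEqFun.coeFn_mul f (c • g), AEEqFun.coeFn_smul c g,
        AEEqFun.coeFn_smul c (f * g), AEEqFun.coeFn_mul f g] with x h1 h2 h3 h4
      simp only [Pi.mul_apply, Pi.smul_apply, smul_eq_mul] at h1 h2 h3 h4
      simp [h1, h2, h3, h4]; ring)

/-- `L^∞(X,μ)`: the Banach algebra of essentially bounded (equivalence classes of)
measurable functions `X → ℂ`, realised as a subalgebra of the algebra of all
a.e.-equivalence classes of functions, with pointwise operations. -/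
def Linfty (ν : MeasureTheory.Measure α) : Subalgebra ℂ (α →ₘ[ν] ℂ) where
  carrier := Lp ℂ ∞ ν
  mul_mem' {f g} hf hg := by
    have hf' : MemLp f ∞ ν := Lp.mem_Lp_iff_memLp.1 hf
    have hg' : MemLp g ∞ ν := Lp.mem_Lp_iff_memLp.1 hg
    refine Lp.mem_Lp_iff_memLp.2 (MemLp.ae_eq (AEEqFun.coeFn_mul f g).symm ?_)
    have : MemLp (⇑f • ⇑g) ∞ ν := hg'.smul hf'
    simpa [smul_eq_mul] using this
  one_mem' := by
    refine Lp.mem_Lp_iff_memLp.2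
      (MemLp.ae_eq (AEEqFun.coeFn_one (α := α) (μ := ν) (β := ℂ)).symm ?_)
    exact memLp_top_const 1
  add_mem' {f g} hf hg := (Lp ℂ ∞ ν).add_mem hf hg
  zero_mem' := (Lp ℂ ∞ ν).zero_mem
  algebraMap_mem' c := by
    have h1 : (1 : α →ₘ[ν] ℂ) ∈ Lp ℂ ∞ ν := by
      refine Lp.mem_Lp_iff_memLp.2
        (MemLp.ae_eq (AEEqFun.coeFn_one (α := α) (μ := ν) (β := ℂ)).symm ?_)
      exact memLp_top_const 1
    have heq : algebraMap ℂ (α →ₘ[ν] ℂ) c = c • (1 : α →ₘ[ν] ℂ) := by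
      rw [Algebra.algebraMap_eq_smul_one]
    rw [heq]
    refine Lp.mem_Lp_iff_memLp.2 (MemLp.ae_eq (AEEqFun.coeFn_smul c (1 : α →ₘ[ν] ℂ)).symm ?_)
    exact (Lp.mem_Lp_iff_memLp.1 h1).const_smul c

lemma mem_Linfty_iff {x : α →ₘ[ν] ℂ} : x ∈ Linfty ν ↔ x ∈ Lp ℂ ∞ ν := Iff.rfl

/-- `L²(X,μ)`: the Hilbert space of square-integrable (equivalence classes of) functions
`X → ℂ`, as a module over `L^∞(X,μ)`, the action being pointwise multiplication. -/
def L2 (ν : MeasureTheory.Measure α) : Submodule (Linfty ν) (α →ₘ[ν] ℂ) where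
  carrier := Lp ℂ 2 ν
  add_mem' {f g} hf hg := (Lp ℂ 2 ν).add_mem hf hg
  zero_mem' := (Lp ℂ 2 ν).zero_mem
  smul_mem' c f hf := by
    have hc : MemLp (⇑(c : α →ₘ[ν] ℂ)) ∞ ν := Lp.mem_Lp_iff_memLp.1 c.2
    have hf' : MemLp f 2 ν := Lp.mem_Lp_iff_memLp.1 hf
    have hsmul : c • f = (c : α →ₘ[ν] ℂ) * f := Algebra.smul_def c f
    rw [hsmul]
    refine Lp.mem_Lp_iff_memLp.2 (MemLp.ae_eq (AEEqFun.coeFn_mul _ f).symm ?_)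
    have : MemLp (⇑(c : α →ₘ[ν] ℂ) • ⇑f) 2 ν := hf'.smul hc
    simpa [smul_eq_mul] using this

instance : CommRing (Linfty ν) := inferInstance
instance : Module (Linfty ν) (α →ₘ[ν] ℂ) := inferInstance
instance : AddCommGroup (L2 ν) := inferInstance
instance : Module (Linfty ν) (L2 ν) := inferInstance

/-! A relation `∑ i, fᵢ • xᵢ = 0` is trivialised pointwise: let `P(t)` be the orthogonal
projection of `ℂⁿ` onto the kernel of `w ↦ f(t) ⬝ᵥ w`, that is `1 - f(t)* f(t) / |f(t)|²`.
Then `P(t) x(t) = x(t)` because `x(t)` lies in that kernel, and `f(t) P(t) = 0`. The entries of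
`P(t)` are measurable in `t` and bounded by `2`, so they define elements `aᵢⱼ` of `L^∞`, and
`xᵢ = ∑ⱼ aᵢⱼ xⱼ`, `∑ᵢ fᵢ aᵢⱼ = 0` is the required factorisation. -/

open Matrix

namespace Matrix

variable {ι : Type*} [Fintype ι]

/-- The orthogonal projection onto the kernel of `w ↦ v ⬝ᵥ w`; for `v = 0` it is `1`,
as `0⁻¹ = 0`. -/
def dotProductKerProj [DecidableEq ι] (v : ι → ℂ) : Matrix ι ι ℂ :=
  1 - (star v ⬝ᵥ v)⁻¹ • vecMulVec (star v) v

open ComplexOrder in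
lemma vecMul_dotProductKerProj [DecidableEq ι] (v : ι → ℂ) :
    v ᵥ* dotProductKerProj v = 0 := by
  rcases eq_or_ne v 0 with rfl | hv
  · simp
  have hs : star v ⬝ᵥ v ≠ 0 := dotProduct_star_self_eq_zero.not.2 hv
  rw [dotProductKerProj, vecMul_sub, vecMul_one, vecMul_smul, vecMul_vecMulVec,
    dotProduct_comm v, smul_smul, inv_mul_cancel₀ hs, one_smul, sub_self]

lemma dotProductKerProj_mulVec [DecidableEq ι] {v w : ι → ℂ} (h : v ⬝ᵥ w = 0) :
    dotProductKerProj v *ᵥ w = w := by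
  simp [dotProductKerProj, sub_mulVec, smul_mulVec, vecMulVec_mulVec, h]

lemma dotProduct_star_self_eq_sum_sq (v : ι → ℂ) :
    star v ⬝ᵥ v = ((∑ i, ‖v i‖ ^ 2 : ℝ) : ℂ) := by
  simp [dotProduct, Complex.conj_mul']

lemma norm_mul_norm_le_norm_dotProduct_star_self (v : ι → ℂ) (i j : ι) :
    ‖v i‖ * ‖v j‖ ≤ ‖star v ⬝ᵥ v‖ := by
  have hle : ∀ k, ‖v k‖ ^ 2 ≤ ∑ l, ‖v l‖ ^ 2 := fun k =>
    Finset.single_le_sum (fun l _ => sq_nonneg ‖v l‖) (Finset.mem_univ k)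
  rw [dotProduct_star_self_eq_sum_sq, Complex.norm_real,
    Real.norm_of_nonneg (Finset.sum_nonneg fun l _ => sq_nonneg _)]
  nlinarith [hle i, hle j, sq_nonneg (‖v i‖ - ‖v j‖)]

lemma norm_dotProductKerProj_apply_le [DecidableEq ι] (v : ι → ℂ) (i j : ι) :
    ‖dotProductKerProj v i j‖ ≤ 2 := by
  have hone : ‖(1 : Matrix ι ι ℂ) i j‖ ≤ 1 := by
    rw [one_apply]
    split_ifs <;> simp
  have hrankOne : ‖(star v ⬝ᵥ v)⁻¹ * (star (v i) * v j)‖ ≤ 1 := by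
    rw [norm_mul, norm_inv, norm_mul, norm_star]
    exact inv_mul_le_one_of_le₀ (norm_mul_norm_le_norm_dotProduct_star_self v i j)
      (norm_nonneg _)
  calc ‖dotProductKerProj v i j‖
      ≤ ‖(1 : Matrix ι ι ℂ) i j‖ + ‖(star v ⬝ᵥ v)⁻¹ * (star (v i) * v j)‖ :=
        norm_sub_le _ _
    _ ≤ 2 := by linarith

lemma measurable_dotProductKerProj_apply [DecidableEq ι] (i j : ι) :
    Measurable fun v : ι → ℂ => dotProductKerProj v i j := by
  simp only [dotProductKerProj, sub_apply, smul_apply, vecMulVec_apply, smul_eq_mul]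
  fun_prop

end Matrix

lemma MeasureTheory.AEEqFun.coeFn_fun_sum_mul {ι : Type*} [Fintype ι]
    (g h : ι → α →ₘ[ν] ℂ) :
    ⇑(∑ i, g i * h i) =ᵐ[ν] fun t => ∑ i, g i t * h i t := by
  filter_upwards [AEEqFun.coeFn_fun_finsetSum Finset.univ (fun i => g i * h i),
    ae_all_iff.2 fun i => AEEqFun.coeFn_mul (g i) (h i)] with t hsum hmul
  simp only [hsum, hmul, Pi.mul_apply]

def Linfty.ofBound (g : α → ℂ) (hg : AEStronglyMeasurable g ν) (C : ℝ)
    (hC : ∀ᵐ t ∂ν, ‖g t‖ ≤ C) : Linfty ν :=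
  ⟨AEEqFun.mk g hg, Lp.mem_Lp_iff_memLp.2 <|
    (memLp_top_of_bound hg C hC).ae_eq (AEEqFun.coeFn_mk g hg).symm⟩

lemma Linfty.coeFn_ofBound (g : α → ℂ) (hg : AEStronglyMeasurable g ν) (C : ℝ)
    (hC : ∀ᵐ t ∂ν, ‖g t‖ ≤ C) :
    ⇑(Linfty.ofBound g hg C hC : α →ₘ[ν] ℂ) =ᵐ[ν] g :=
  AEEqFun.coeFn_mk g hg

lemma Linfty.coeFn_sum_mul {ι : Type*} [Fintype ι] (f g : ι → Linfty ν) :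
    ⇑((∑ i, f i * g i : Linfty ν) : α →ₘ[ν] ℂ) =ᵐ[ν]
      fun t => ∑ i, (f i : α →ₘ[ν] ℂ) t * (g i : α →ₘ[ν] ℂ) t := by
  push_cast
  exact AEEqFun.coeFn_fun_sum_mul _ _

lemma L2.coeFn_sum_smul {ι : Type*} [Fintype ι] (r : ι → Linfty ν) (m : ι → L2 ν) :
    ⇑((∑ i, r i • m i : L2 ν) : α →ₘ[ν] ℂ) =ᵐ[ν]
      fun t => ∑ i, (r i : α →ₘ[ν] ℂ) t * (m i : α →ₘ[ν] ℂ) t := by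
  simp only [Submodule.coe_sum, Submodule.coe_smul, Algebra.smul_def]
  exact AEEqFun.coeFn_fun_sum_mul _ _

theorem L2_flat_over_Linfty_general
    {X : Type*} [MeasurableSpace X] (μ : MeasureTheory.Measure X) :
    Module.Flat (Linfty μ) (L2 μ) := by
  rw [Module.Flat.iff_forall_isTrivialRelation]
  intro n f x hrel
  let F : X → Fin n → ℂ := fun t i => (f i : X →ₘ[μ] ℂ) t
  let M : X → Fin n → ℂ := fun t i => (x i : X →ₘ[μ] ℂ) t
  have hF : Measurable F :=
    measurable_pi_lambda _ fun i => (f i : X →ₘ[μ] ℂ).stronglyMeasurable.measurable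
  let a i j : Linfty μ := Linfty.ofBound (fun t => dotProductKerProj (F t) i j)
    ((measurable_dotProductKerProj_apply i j).comp hF).aestronglyMeasurable 2
    (ae_of_all _ fun t => norm_dotProductKerProj_apply_le (F t) i j)
  have ha : ∀ᵐ t ∂μ, ∀ i j, (a i j : X →ₘ[μ] ℂ) t = dotProductKerProj (F t) i j :=
    ae_all_iff.2 fun i => ae_all_iff.2 fun j => Linfty.coeFn_ofBound ..
  have hFM : ∀ᵐ t ∂μ, F t ⬝ᵥ M t = 0 := by
    have hsum := L2.coeFn_sum_smul f x
    rw [hrel, ZeroMemClass.coe_zero] at hsum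
    filter_upwards [hsum, AEEqFun.coeFn_zero (β := ℂ)] with t hsum hzero
    exact hsum.symm.trans hzero
  refine ⟨n, a, x, fun i => Subtype.ext (AEEqFun.ext ?_), fun j => Subtype.ext (AEEqFun.ext ?_)⟩
  · filter_upwards [L2.coeFn_sum_smul (a i) x, ha, hFM] with t hsum hat hFMt
    rw [hsum]
    simp only [hat]
    exact (congrFun (dotProductKerProj_mulVec hFMt) i).symm
  · rw [ZeroMemClass.coe_zero]
    filter_upwards [Linfty.coeFn_sum_mul f (a · j), ha, AEEqFun.coeFn_zero (β := ℂ)]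
      with t hsum hat hzero
    rw [hsum, hzero]
    simp only [hat, Pi.zero_apply]
    exact congrFun (vecMul_dotProductKerProj (F t)) j

/-- If `X` is a locally compact Hausdorff topological space and `μ` is a
positive Radon measure on `X`, then `L²(X,μ)` is a flat `L^∞(X,μ)`-module. -/
theorem L2_flat_over_Linfty
    {X : Type*} [TopologicalSpace X] [T2Space X] [LocallyCompactSpace X]
    [MeasurableSpace X] [BorelSpace X]
    (μ : MeasureTheory.Measure X) [μ.Regular] :
    Module.Flat (Linfty μ) (L2 μ) :=
  L2_flat_over_Linfty_general μ
end
end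

section
/- Every finitely generated ideal of L^∞(X,μ) is principal; that is, L^∞(X,μ) is a Bézout ring. -/
open MeasureTheory Filter Topology
open scoped ENNReal

set_option synthInstance.maxHeartbeats 1000000
set_option maxHeartbeats 1000000

noncomputable section

variable {α : Type*} [MeasurableSpace α] {ν : MeasureTheory.Measure α}

/-! For `f, g ∈ L^∞` put `h = |f| + |g|`. Then `f = (f / h) h` and `g = (g / h) h` with
`|f / h|, |g / h| ≤ 1`, while `h = (f̄ / |f|) f + (ḡ / |g|) g` with unimodular (or zero)
coefficients, so `(f, g) = (h)`. -/

open ComplexConjugate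

namespace Complex

lemma div_ofReal_mul_cancel_of_norm_le {z : ℂ} {s : ℝ} (h : ‖z‖ ≤ s) : z / s * s = z :=
  div_mul_cancel_of_imp fun hs => norm_le_zero_iff.1 (h.trans (ofReal_eq_zero.1 hs).le)

lemma norm_div_ofReal_le_one_of_norm_le {z : ℂ} {s : ℝ} (h : ‖z‖ ≤ s) :
    ‖z / s‖ ≤ 1 := by
  rw [norm_div, norm_real, Real.norm_of_nonneg ((norm_nonneg z).trans h)]
  exact div_le_one_of_le₀ h ((norm_nonneg z).trans h)

lemma conj_div_norm_mul_self (z : ℂ) : conj z / ‖z‖ * z = ‖z‖ := by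
  rcases eq_or_ne z 0 with rfl | hz
  · simp
  · rw [div_mul_eq_mul_div, conj_mul', sq,
      mul_div_cancel_right₀ _ (ofReal_ne_zero.2 (norm_ne_zero_iff.2 hz))]

end Complex

namespace Linfty

instance : CoeFun (Linfty ν) (fun _ => α → ℂ) := ⟨fun f => ⇑(f : α →ₘ[ν] ℂ)⟩

lemma memLp_top (f : Linfty ν) : MemLp f ∞ ν :=
  Lp.mem_Lp_iff_memLp.1 f.2

def ofMemLp {F : α → ℂ} (hF : MemLp F ∞ ν) : Linfty ν :=
  ⟨hF.toLp F, (hF.toLp F).2⟩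

lemma coeFn_ofMemLp {F : α → ℂ} (hF : MemLp F ∞ ν) : ofMemLp hF =ᵐ[ν] F :=
  hF.coeFn_toLp

lemma ext_ae {f g : Linfty ν} (h : f =ᵐ[ν] g) : f = g :=
  Subtype.ext (AEEqFun.ext h)

lemma coeFn_mul (f g : Linfty ν) : ⇑(f * g) =ᵐ[ν] f * g :=
  AEEqFun.coeFn_mul _ _

lemma coeFn_add (f g : Linfty ν) : ⇑(f + g) =ᵐ[ν] f + g :=
  AEEqFun.coeFn_add _ _

lemma dvd_of_ae_eq_mul {f h : Linfty ν} {A : α → ℂ} (hA : MemLp A ∞ ν)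
    (hf : f =ᵐ[ν] A * h) : h ∣ f := by
  refine ⟨ofMemLp hA, ext_ae ?_⟩
  filter_upwards [hf, coeFn_mul h (ofMemLp hA), coeFn_ofMemLp hA] with x hfx hmul hAx
  simp only [hfx, hmul, Pi.mul_apply, hAx, mul_comm]

lemma mem_span_pair_of_ae_eq {f g h : Linfty ν} {U V : α → ℂ} (hU : MemLp U ∞ ν)
    (hV : MemLp V ∞ ν) (hh : h =ᵐ[ν] U * f + V * g) : h ∈ Ideal.span {f, g} := by
  refine Ideal.mem_span_pair.2 ⟨ofMemLp hU, ofMemLp hV, ext_ae ?_⟩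
  filter_upwards [hh, coeFn_add (ofMemLp hU * f) (ofMemLp hV * g), coeFn_mul (ofMemLp hU) f,
    coeFn_mul (ofMemLp hV) g, coeFn_ofMemLp hU, coeFn_ofMemLp hV] with x hhx hadd hUf hVg hUx hVx
  simp only [hhx, hadd, Pi.add_apply, hUf, hVg, Pi.mul_apply, hUx, hVx]

theorem span_pair_isPrincipal (f g : Linfty ν) : (Ideal.span {f, g}).IsPrincipal := by
  have hf := (memLp_top f).1.aemeasurable
  have hg := (memLp_top g).1.aemeasurable
  have hbdd {Φ : α → ℂ} (hΦ : AEMeasurable Φ ν) (hΦ1 : ∀ x, ‖Φ x‖ ≤ 1) :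
      MemLp Φ ∞ ν :=
    memLp_top_of_bound hΦ.aestronglyMeasurable 1 (.of_forall hΦ1)
  set H : α → ℝ := fun x => ‖f x‖ + ‖g x‖
  have hH : MemLp (fun x => (H x : ℂ)) ∞ ν :=
    ((memLp_top f).norm.add (memLp_top g).norm).ofReal
  have hdvd (p : Linfty ν) (hp : ∀ x, ‖p x‖ ≤ H x) : ofMemLp hH ∣ p := by
    refine dvd_of_ae_eq_mul (A := fun x => p x / H x) (hbdd (by fun_prop)
      fun x => Complex.norm_div_ofReal_le_one_of_norm_le (hp x)) ?_
    filter_upwards [coeFn_ofMemLp hH] with x hx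
    rw [Pi.mul_apply, hx, Complex.div_ofReal_mul_cancel_of_norm_le (hp x)]
  have hphase (p : Linfty ν) : MemLp (fun x => conj (p x) / (‖p x‖ : ℂ)) ∞ ν :=
    hbdd (by fun_prop) fun x => Complex.norm_div_ofReal_le_one_of_norm_le (Complex.norm_conj _).le
  refine ⟨ofMemLp hH, le_antisymm ?_ ?_⟩
  · refine Ideal.span_le.2 (Set.pair_subset ?_ ?_) <;>
      rw [SetLike.mem_coe, Ideal.mem_span_singleton]
    · exact hdvd f fun x => le_add_of_nonneg_right (norm_nonneg _)
    · exact hdvd g fun x => le_add_of_nonneg_left (norm_nonneg _)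
  · rw [Ideal.span_singleton_le_iff_mem]
    refine mem_span_pair_of_ae_eq (hphase f) (hphase g) ?_
    filter_upwards [coeFn_ofMemLp hH] with x hx
    rw [Pi.add_apply, Pi.mul_apply, Pi.mul_apply, hx, Complex.conj_div_norm_mul_self,
      Complex.conj_div_norm_mul_self, Complex.ofReal_add]

instance : IsBezout (Linfty ν) :=
  IsBezout.iff_span_pair_isPrincipal.2 span_pair_isPrincipal

end Linfty

theorem Linfty_bezout_general
    {X : Type*}
    [MeasurableSpace X]
    (μ : MeasureTheory.Measure X)
    (I : Ideal (Linfty μ)) (hI : I.FG) :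
    I.IsPrincipal :=
  IsBezout.isPrincipal_of_FG I hI

/-- Every finitely generated ideal of `L^∞(X,μ)` is principal; that is,
`L^∞(X,μ)` is a Bézout ring. -/
theorem Linfty_bezout
    {X : Type*} [TopologicalSpace X] [T2Space X] [LocallyCompactSpace X]
    [MeasurableSpace X] [BorelSpace X]
    (μ : MeasureTheory.Measure X) [μ.Regular]
    (I : Ideal (Linfty μ)) (hI : I.FG) :
    I.IsPrincipal :=
  Linfty_bezout_general μ I hI
end
end

section
/- Suppose μ is σ-finite and g ∈ L^∞(X,μ) satisfies g·L²(X,μ) = L²(X,μ), i.e., every element of L²(X,μ) can be written as g·h for some h ∈ L²(X,μ). Then g is invertible in L^∞(X,μ), i.e., there exists g⁻¹ ∈ L^∞(X,μ) with g·g⁻¹ = 1 almost everywhere. -/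
/-!
Multiplication by `g` is a bounded operator on `L²`, surjective by hypothesis, so by the open
mapping theorem every `f ∈ L²` is `g • h` with `‖h‖ ≤ C ‖f‖`. Testing this on the indicator of
a set `B` of finite measure on which `‖g‖ < (2C)⁻¹` gives `‖1_B‖ ≤ (2C)⁻¹ ‖h‖ ≤ ‖1_B‖ / 2`,
so `B` is null. By σ-finiteness `‖g‖ ≥ (2C)⁻¹` almost everywhere, and `1 / g` is then an
inverse of `g` in `L^∞`.
-/

open MeasureTheory Filter Topology
open scoped ENNReal

set_option synthInstance.maxHeartbeats 1000000
set_option maxHeartbeats 1000000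

noncomputable section

variable {α : Type*} [MeasurableSpace α] {ν : MeasureTheory.Measure α}

namespace MeasureTheory.Lp

variable {X 𝕜 : Type*} [MeasurableSpace X] {μ : Measure X} [NormedDivisionRing 𝕜] {p : ℝ≥0∞}

theorem norm_le_mul_norm_of_mul_ae_eq {f h : Lp 𝕜 p μ} {g : X → 𝕜} {ε : ℝ} (hε : 0 ≤ ε)
    (hgh : g * ⇑h =ᵐ[μ] f) (hg : ∀ᵐ x ∂μ, f x ≠ 0 → ‖g x‖ ≤ ε) : ‖f‖ ≤ ε * ‖h‖ := by
  refine norm_le_mul_norm_of_ae_le_mul ?_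
  filter_upwards [hgh, hg] with x hx hgx
  by_cases hfx : f x = 0
  · rw [norm_eq_zero.2 hfx]
    positivity
  · rw [← hx, Pi.mul_apply, norm_mul]
    gcongr
    exact hgx hfx

theorem ae_le_norm_of_forall_exists_mul_ae_eq [SigmaFinite μ] {g : X → 𝕜}
    (hg : StronglyMeasurable g) (hp : p ≠ 0) {C ε : ℝ} (hε : 0 ≤ ε) (hεC : ε * C < 1)
    (H : ∀ f : Lp 𝕜 p μ, ∃ h : Lp 𝕜 p μ, g * ⇑h =ᵐ[μ] f ∧ ‖h‖ ≤ C * ‖f‖) :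
    ∀ᵐ x ∂μ, ε ≤ ‖g x‖ := by
  simp_rw [ae_iff, not_le]
  by_contra hpos
  obtain ⟨B, hBm, hBA, hB0, hBtop⟩ := Measure.exists_subset_measure_lt_top
    (measurableSet_lt hg.norm.measurable measurable_const) (pos_iff_ne_zero.2 hpos)
  set f := indicatorConstLp p hBm hBtop.ne (1 : 𝕜)
  obtain ⟨h, hgh, hh⟩ := H f
  have hf_pos : 0 < ‖f‖ := by
    rw [norm_indicatorConstLp' hp hB0.ne', norm_one, one_mul]
    exact Real.rpow_pos_of_pos (ENNReal.toReal_pos hB0.ne' hBtop.ne) _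
  have hf_le : ‖f‖ ≤ ε * C * ‖f‖ := calc
    ‖f‖ ≤ ε * ‖h‖ := by
      refine norm_le_mul_norm_of_mul_ae_eq hε hgh ?_
      filter_upwards [indicatorConstLp_coeFn_notMem (E := 𝕜) (hs := hBm) (hμs := hBtop.ne)]
        with x hx hfx
      exact (hBA (not_imp_comm.1 hx hfx)).le
    _ ≤ ε * (C * ‖f‖) := by gcongr
    _ = ε * C * ‖f‖ := by ring
  nlinarith

end MeasureTheory.Lp

namespace Linfty

variable {X : Type*} [MeasurableSpace X] {μ : Measure X}

def mulL2 (g : Linfty μ) : Lp ℂ 2 μ →L[ℂ] Lp ℂ 2 μ :=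
  (ContinuousLinearMap.mul ℂ ℂ).holderL μ ∞ 2 2 ⟨g, g.2⟩

theorem coeFn_mulL2 (g : Linfty μ) (h : Lp ℂ 2 μ) :
    mulL2 g h =ᵐ[μ] ⇑(g : X →ₘ[μ] ℂ) * ⇑h :=
  ContinuousLinearMap.coeFn_holder _ _ _

theorem mulL2_surjective {g : Linfty μ} (hsurj : ∀ f : L2 μ, ∃ h : L2 μ, f = g • h) :
    Function.Surjective (mulL2 g) := by
  intro f
  obtain ⟨h, hfh⟩ := hsurj ⟨f, f.2⟩
  have hf : (f : X →ₘ[μ] ℂ) = g * (h : X →ₘ[μ] ℂ) := by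
    simpa only [Submodule.coe_smul, Subalgebra.smul_def, smul_eq_mul]
      using congrArg Subtype.val hfh
  refine ⟨⟨h, h.2⟩, Lp.ext ?_⟩
  filter_upwards [coeFn_mulL2 g ⟨h, h.2⟩, AEEqFun.coeFn_mul (g : X →ₘ[μ] ℂ) h] with x h₁ h₂
  rw [h₁, hf, h₂]

theorem exists_mul_eq_one_of_ae_le_norm {g : Linfty μ} {ε : ℝ} (hε : 0 < ε)
    (hg : ∀ᵐ x ∂μ, ε ≤ ‖(g : X →ₘ[μ] ℂ) x‖) : ∃ ginv : Linfty μ, g * ginv = 1 := by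
  set G : X →ₘ[μ] ℂ := (g : X →ₘ[μ] ℂ)
  have hinv_meas : AEStronglyMeasurable (fun x => (G x)⁻¹) μ :=
    G.stronglyMeasurable.measurable.inv.aestronglyMeasurable
  set Ginv := AEEqFun.mk _ hinv_meas
  have hGinv : MemLp (fun x => (G x)⁻¹) ∞ μ := by
    refine memLp_top_of_bound hinv_meas ε⁻¹ ?_
    filter_upwards [hg] with x hx
    rw [norm_inv]
    exact inv_anti₀ hε hx
  refine ⟨⟨Ginv, mem_Linfty_iff.2 <| Lp.mem_Lp_iff_memLp.2 <|
    hGinv.ae_eq (AEEqFun.coeFn_mk _ _).symm⟩, Subtype.ext ?_⟩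
  change G * Ginv = 1
  refine AEEqFun.ext ?_
  filter_upwards [AEEqFun.coeFn_mul G Ginv, AEEqFun.coeFn_mk _ hinv_meas,
    AEEqFun.coeFn_one (α := X) (μ := μ) (β := ℂ), hg] with x hmul hmk hone hx
  have hGx : G x ≠ 0 := norm_pos_iff.1 (hε.trans_le hx)
  rw [hmul, hone, Pi.mul_apply, hmk, mul_inv_cancel₀ hGx, Pi.one_apply]

end Linfty

theorem isUnit_of_smul_surjective_general {X : Type*} [MeasurableSpace X]
    (μ : MeasureTheory.Measure X) [SigmaFinite μ]
    (g : Linfty μ)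
    (hsurj : ∀ f : L2 μ, ∃ h : L2 μ, f = g • h) :
    ∃ ginv : Linfty μ, g * ginv = 1 := by
  obtain ⟨C, hC, hpre⟩ :=
    (Linfty.mulL2 g).exists_preimage_norm_le (Linfty.mulL2_surjective hsurj)
  have hε : (2 * C)⁻¹ * C < 1 := by
    field_simp
    norm_num
  refine Linfty.exists_mul_eq_one_of_ae_le_norm (ε := (2 * C)⁻¹) (by positivity) ?_
  refine Lp.ae_le_norm_of_forall_exists_mul_ae_eq (AEEqFun.stronglyMeasurable _) two_ne_zero
    (by positivity) hε fun f => ?_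
  obtain ⟨h, rfl, hh⟩ := hpre f
  exact ⟨h, (Linfty.coeFn_mulL2 g h).symm, hh⟩

/-- Suppose `μ` is σ-finite and `g ∈ L^∞(X,μ)` is such that every element
of `L²(X,μ)` can be written as `g·h` for some `h ∈ L²(X,μ)`. Then `g` is invertible in
`L^∞(X,μ)`. -/
theorem isUnit_of_smul_surjective
    {X : Type*} [TopologicalSpace X] [T2Space X] [LocallyCompactSpace X]
    [MeasurableSpace X] [BorelSpace X]
    (μ : MeasureTheory.Measure X) [μ.Regular] [SigmaFinite μ]
    (g : Linfty μ)
    (hsurj : ∀ f : L2 μ, ∃ h : L2 μ, f = g • h) :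
    ∃ ginv : Linfty μ, g * ginv = 1 :=
  isUnit_of_smul_surjective_general μ g hsurj
end
end

section
/- Assume the exhaustion hypothesis on (X,μ). Then L²(X,μ) is not a faithfully flat L^∞(X,μ)-module. -/
open MeasureTheory Filter Topology
open scoped ENNReal

set_option synthInstance.maxHeartbeats 1000000
set_option maxHeartbeats 1000000

noncomputable section

variable {α : Type*} [MeasurableSpace α] {ν : MeasureTheory.Measure α}

/-!
Index the points of `X` by `N x`, the first `n` with `x ∈ U n`. The elements of `L^∞` that
essentially tend to zero as `N → ∞` form an ideal `J`, which is proper because every set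
`{N > n}` has positive measure. Yet `J • L² = L²`: for `g ∈ L²` the masses `∫_{N = n} |g|²` are
summable, so some weights `c n → 0` keep `g / (c ∘ N)` square integrable, and
`g = (c ∘ N) · (g / (c ∘ N))`. A faithfully flat module `M` has `I • M ≠ M` for every proper `I`.
-/

theorem div_sqrt_le_two_mul_sub_sqrt {x y : ℝ} (hy : 0 ≤ y) (hyx : y ≤ x) (hx : 0 < x) :
    (x - y) / √x ≤ 2 * (√x - √y) := by
  have hsx : 0 < √x := Real.sqrt_pos.2 hx
  have hle : √y ≤ √x := Real.sqrt_le_sqrt hyx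
  rw [div_le_iff₀ hsx]
  nlinarith [Real.sq_sqrt hy, Real.sq_sqrt hx.le, Real.sqrt_nonneg y]

theorem summable_sub_succ_of_antitone {f : ℕ → ℝ} (hf : Antitone f) (h0 : ∀ n, 0 ≤ f n) :
    Summable fun n => f n - f (n + 1) := by
  refine summable_of_sum_range_le (c := f 0) (fun n => sub_nonneg.2 (hf n.le_succ)) fun n => ?_
  rw [Finset.sum_range_sub']
  linarith [h0 n]

theorem exists_tendsto_zero_summable_div {a : ℕ → ℝ} (ha : ∀ n, 0 ≤ a n) (hs : Summable a) :
    ∃ c : ℕ → ℝ, (∀ n, 0 < c n) ∧ Tendsto c atTop (𝓝 0) ∧ Summable fun n => a n / c n := by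
  -- `c n = √(t n)` for the tails `t` of `a + 2⁻ⁿ`, which are positive, and then
  -- `a n / c n ≤ 2 (√(t n) - √(t (n + 1)))` telescopes.
  set b : ℕ → ℝ := fun n => a n + (1 / 2) ^ n
  have hb : ∀ n, 0 < b n := fun n => by positivity [ha n]
  have hbs : Summable b := hs.add summable_geometric_two
  set t : ℕ → ℝ := fun n => ∑' k, b (k + n)
  have ht : ∀ n, t n = b n + t (n + 1) := fun n => by
    simpa [t, add_right_comm _ 1 n, add_assoc] using
      ((summable_nat_add_iff n).2 hbs).tsum_eq_zero_add
  have ht0 : ∀ n, 0 < t n := fun n =>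
    ((summable_nat_add_iff n).2 hbs).tsum_pos (fun k => (hb _).le) 0 (hb _)
  have hanti : Antitone t := antitone_nat_of_succ_le fun n => by linarith [ht n, hb n]
  refine ⟨fun n => √(t n), fun n => Real.sqrt_pos.2 (ht0 n), ?_, ?_⟩
  · simpa using (tendsto_sum_nat_add b).sqrt
  · refine .of_nonneg_of_le (fun n => div_nonneg (ha n) (Real.sqrt_nonneg _)) (fun n => ?_)
      ((summable_sub_succ_of_antitone (fun m n h => Real.sqrt_le_sqrt (hanti h))
        fun n => Real.sqrt_nonneg _).mul_left 2)
    calc a n / √(t n) ≤ (t n - t (n + 1)) / √(t n) := by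
          gcongr
          linarith [ht n, pow_pos (one_half_pos (α := ℝ)) n]
      _ ≤ 2 * (√(t n) - √(t (n + 1))) :=
          div_sqrt_le_two_mul_sub_sqrt (ht0 _).le (hanti n.le_succ) (ht0 n)

theorem exists_tendsto_zero_summable_div_sq {a : ℕ → ℝ} (ha : ∀ n, 0 ≤ a n) (hs : Summable a) :
    ∃ c : ℕ → ℝ, (∀ n, 0 < c n) ∧ Tendsto c atTop (𝓝 0) ∧ Summable fun n => a n / c n ^ 2 := by
  obtain ⟨c, hc0, hc, hsum⟩ := exists_tendsto_zero_summable_div ha hs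
  refine ⟨fun n => √(c n), fun n => Real.sqrt_pos.2 (hc0 n), ?_, ?_⟩
  · simpa using hc.sqrt
  · simpa [Real.sq_sqrt (hc0 _).le] using hsum

section

variable {X : Type*} [MeasurableSpace X] {μ : Measure X}

theorem exists_tendsto_zero_memLp_two_div {N : X → ℕ} (hN : Measurable N) {g : X → ℂ}
    (hg : MemLp g 2 μ) :
    ∃ c : ℕ → ℝ, (∀ n, 0 < c n) ∧ Tendsto c atTop (𝓝 0) ∧
      MemLp (fun x => g x / c (N x)) 2 μ := by
  set s : ℕ → Set X := fun n => N ⁻¹' {n}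
  have hs : ∀ n, MeasurableSet (s n) := fun n => hN (measurableSet_singleton n)
  have hsU : ⋃ n, s n = Set.univ := Set.iUnion_eq_univ_iff.2 fun x => ⟨N x, rfl⟩
  have hsq : Integrable (fun x => ‖g x‖ ^ 2) μ := (memLp_two_iff_integrable_sq_norm hg.1).1 hg
  have hsum : HasSum (fun n => ∫ x in s n, ‖g x‖ ^ 2 ∂μ) (∫ x in ⋃ n, s n, ‖g x‖ ^ 2 ∂μ) :=
    hasSum_integral_iUnion hs (pairwise_disjoint_fiber N) (by rw [hsU]; exact hsq.integrableOn)
  obtain ⟨c, hc0, hc, hcsum⟩ := exists_tendsto_zero_summable_div_sq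
    (fun n => setIntegral_nonneg (hs n) fun x _ => by positivity) hsum.summable
  refine ⟨c, hc0, hc, ?_⟩
  have hnorm : ∀ x, ‖g x / c (N x)‖ ^ 2 = ‖g x‖ ^ 2 / c (N x) ^ 2 := fun x => by
    rw [norm_div, Complex.norm_real, Real.norm_of_nonneg (hc0 _).le, div_pow]
  have hpiece : ∀ n, Set.EqOn (fun x => ‖g x‖ ^ 2 / c n ^ 2)
      (fun x => ‖g x / c (N x)‖ ^ 2) (s n) := fun n x (hx : N x = n) => by
    dsimp only
    rw [hnorm, hx]
  have hmeas : AEStronglyMeasurable (fun x => g x / c (N x)) μ :=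
    hg.1.div₀ (Complex.measurable_ofReal.comp (measurable_from_nat.comp hN)).aestronglyMeasurable
  rw [memLp_two_iff_integrable_sq_norm hmeas, ← integrableOn_univ, ← hsU]
  refine integrableOn_iUnion_of_summable_integral_norm
    (fun n => IntegrableOn.congr_fun (hsq.integrableOn.div_const _) (hpiece n) (hs n))
    (hcsum.congr fun n => ?_)
  simp_rw [norm_pow, norm_norm]
  rw [← setIntegral_congr_fun (hs n) (hpiece n), integral_div]

theorem Linfty.isBoundedUnder_norm (c : Linfty μ) :
    IsBoundedUnder (· ≤ ·) (ae μ) (norm ∘ (c : X →ₘ[μ] ℂ)) := by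
  have hc : eLpNormEssSup (c : X →ₘ[μ] ℂ) μ < ∞ := by
    simpa [eLpNorm_exponent_top] using (Lp.mem_Lp_iff_memLp.1 c.2).eLpNorm_lt_top
  obtain ⟨C, hC⟩ := eLpNormEssSup_lt_top_iff_isBoundedUnder.1 hc
  exact ⟨C, hC.mono fun x hx => NNReal.coe_le_coe.2 hx⟩

def tendstoZeroIdeal (μ : Measure X) (l : Filter X) : Ideal (Linfty μ) where
  carrier := {f | Tendsto (f : X →ₘ[μ] ℂ) (l ⊓ ae μ) (𝓝 0)}
  zero_mem' := tendsto_const_nhds.congr' (AEEqFun.coeFn_zero.symm.filter_mono inf_le_right)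
  add_mem' {f g} hf hg := by
    simpa using (hf.add hg).congr' ((AEEqFun.coeFn_add _ _).symm.filter_mono inf_le_right)
  smul_mem' c f hf := by
    simpa using (isBoundedUnder_le_mul_tendsto_zero
      ((Linfty.isBoundedUnder_norm c).mono inf_le_right) hf).congr'
      ((AEEqFun.coeFn_mul _ _).symm.filter_mono inf_le_right)

theorem tendstoZeroIdeal_ne_top {l : Filter X} [(l ⊓ ae μ).NeBot] :
    tendstoZeroIdeal μ l ≠ ⊤ := fun h => by
  have h1 : Tendsto ((1 : Linfty μ) : X →ₘ[μ] ℂ) (l ⊓ ae μ) (𝓝 0) :=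
    (h ▸ Submodule.mem_top : (1 : Linfty μ) ∈ tendstoZeroIdeal μ l)
  exact one_ne_zero (tendsto_nhds_unique
    (tendsto_const_nhds.congr' (AEEqFun.coeFn_one.symm.filter_mono inf_le_right)) h1)

theorem neBot_comap_atTop_inf_ae {N : X → ℕ} (hN : ∀ n, μ {x | n < N x} ≠ 0) :
    (comap N atTop ⊓ ae μ).NeBot := by
  refine inf_neBot_iff.2 fun s hs t ht => ?_
  obtain ⟨n, -, hn⟩ := (atTop_basis.comap N).mem_iff.1 hs
  refine nonempty_of_measure_ne_zero (μ := μ) ?_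
  rw [measure_inter_conull ht]
  exact fun h0 => hN n (measure_mono_null (fun x hx => hn (le_of_lt hx : n ≤ N x)) h0)

theorem tendstoZeroIdeal_comap_smul_top {N : X → ℕ} (hN : Measurable N) :
    tendstoZeroIdeal μ (comap N atTop) • (⊤ : Submodule (Linfty μ) (L2 μ)) = ⊤ := by
  rw [eq_top_iff]
  rintro ⟨g, hg⟩ -
  obtain ⟨c, hc0, hc, hH⟩ := exists_tendsto_zero_memLp_two_div hN (Lp.mem_Lp_iff_memLp.1 hg)
  obtain ⟨C, hC⟩ := hc.bddAbove_range
  have hw : MemLp (fun x => (c (N x) : ℂ)) ∞ μ :=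
    memLp_top_of_bound
      (Complex.measurable_ofReal.comp (measurable_from_nat.comp hN)).aestronglyMeasurable C
      (ae_of_all _ fun x => by simpa [abs_of_pos (hc0 _)] using hC ⟨N x, rfl⟩)
  let F : Linfty μ := ⟨hw.toLp _, (hw.toLp _).2⟩
  let H : L2 μ := ⟨hH.toLp _, (hH.toLp _).2⟩
  have hF : F ∈ tendstoZeroIdeal μ (comap N atTop) := by
    refine Tendsto.congr' (hw.coeFn_toLp.symm.filter_mono inf_le_right) ?_
    simpa using ((hc.comp tendsto_comap).ofReal).mono_left inf_le_left
  have hFH : (⟨g, hg⟩ : L2 μ) = F • H := by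
    refine Subtype.ext (AEEqFun.ext ?_)
    filter_upwards [AEEqFun.coeFn_mul (F : X →ₘ[μ] ℂ) H, hw.coeFn_toLp, hH.coeFn_toLp]
      with x hmul hFx hHx
    change g x = (F * H : X →ₘ[μ] ℂ) x
    rw [hmul, Pi.mul_apply, hFx, hHx, mul_div_cancel₀ _ (by exact_mod_cast (hc0 _).ne')]
  rw [hFH]
  exact Submodule.smul_mem_smul hF Submodule.mem_top

theorem not_faithfullyFlat_L2 {N : X → ℕ} (hN : Measurable N) (hpos : ∀ n, μ {x | n < N x} ≠ 0) :
    ¬ Module.FaithfullyFlat (Linfty μ) (L2 μ) := by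
  have := neBot_comap_atTop_inf_ae hpos
  rw [Module.FaithfullyFlat.iff_flat_and_proper_ideal]
  exact fun ⟨_, h⟩ => h _ tendstoZeroIdeal_ne_top (tendstoZeroIdeal_comap_smul_top hN)

end

theorem exists_measurable_setOf_lt_eq_compl {X : Type*} [MeasurableSpace X] {U : ℕ → Set X}
    (hmono : Monotone U) (hunion : ⋃ n, U n = Set.univ) (hmeas : ∀ n, MeasurableSet (U n)) :
    ∃ N : X → ℕ, Measurable N ∧ ∀ n, {x | n < N x} = (U n)ᶜ := by
  classical
  have hex : ∀ x, ∃ n, x ∈ U n := fun x => Set.mem_iUnion.1 (hunion ▸ Set.mem_univ x)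
  refine ⟨fun x => Nat.find (hex x), measurable_find hex hmeas, fun n => Set.ext fun x => ?_⟩
  change n < Nat.find (hex x) ↔ x ∉ U n
  rw [Nat.lt_find_iff]
  exact ⟨fun h => h n le_rfl, fun h m hm hx => h (hmono hm hx)⟩

theorem L2_not_faithfully_flat_general
    {X : Type*} [MeasurableSpace X] (μ : MeasureTheory.Measure X)
    (U : ℕ → Set X) (hmono : Monotone U)
    (hunion : ⋃ n, U n = Set.univ) (hmeas : ∀ n, MeasurableSet (U n))
    (hpos : ∀ n, 0 < μ (U (n + 1) \ U n)) :
    ¬ Module.FaithfullyFlat (Linfty μ) (L2 μ) := by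
  obtain ⟨N, hN, hNU⟩ := exists_measurable_setOf_lt_eq_compl hmono hunion hmeas
  refine not_faithfullyFlat_L2 hN fun n => ?_
  rw [hNU]
  exact ((hpos n).trans_le (measure_mono fun x hx => hx.2)).ne'

/-- Under the exhaustion hypothesis (Borel sets `U₁ ⊆ U₂ ⊆ ⋯` covering `X`
with compact closures and `μ(Uₙ \ Uₙ₋₁) > 0`, with `U 0 = ∅`), the `L^∞(X,μ)`-module
`L²(X,μ)` is not faithfully flat. -/
theorem L2_not_faithfully_flat
    {X : Type*} [TopologicalSpace X] [T2Space X] [LocallyCompactSpace X]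
    [MeasurableSpace X] [BorelSpace X]
    (μ : MeasureTheory.Measure X) [μ.Regular]
    (U : ℕ → Set X) (hU0 : U 0 = ∅) (hmono : Monotone U)
    (hunion : ⋃ n, U n = Set.univ) (hmeas : ∀ n, MeasurableSet (U n))
    (hcpt : ∀ n, IsCompact (closure (U n)))
    (hpos : ∀ n, 0 < μ (U (n + 1) \ U n)) :
    ¬ Module.FaithfullyFlat (Linfty μ) (L2 μ) :=
  L2_not_faithfully_flat_general μ U hmono hunion hmeas hpos
end
end
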